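/- Let G = O(V) with dim V = n ≥ 2r (or G = Sp(V) with n > 2r), and let ρ : B_r(εn) → End_ℂ(V̲^{⊗r}) be the linear map f ↦ Σ_{I ⊆ {1,...,r}} ρ_I(f). Suppose δ ∈ B_r(εn) and J ⊊ {1,...,r} satisfy ρ(δ)(Φ(e^w)(v) − v) = 0 for all w ∈ V and all v ∈ V̲_J^{⊗r}. Then ρ_J(δ) = 0, i.e., ρ(δ) annihilates V̲_J^{⊗r}. -/
import Mathlib


open Finset Matrix

namespace EnhancedBrauer

/- Coordinates: `V = ℂⁿ` with a nondegenerate bilinear form of matrix `Q`; the enhanced space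
`V̲ = V ⊕ ℂη` is `ℂ^{n+1}`, the index `Fin.last n` playing the role of `η`.  The enhanced
tensor power `V̲^{⊗r}` is `(Fin r → Fin (n+1)) → ℂ`, and its linear endomorphisms are
matrices indexed by `Fin r → Fin (n+1)` (acting by `mulVec`/`mulVecLin`).  For
`I ⊆ {1,…,r}`, the summand `V̲_I^{⊗r}` is spanned by the basis indices `k` with
`k i ≠ Fin.last n` exactly for `i ∈ I`. -/

/-- Coordinate matrix of the diagonal action of `g` on the `m`-th tensor power of `ℂ^N`. -/
noncomputable def PhiMat {N m : ℕ} (g : Matrix (Fin N) (Fin N) ℂ) :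
    Matrix (Fin m → Fin N) (Fin m → Fin N) ℂ :=
  fun k q => ∏ i, g (k i) (q i)

/-- Coordinate matrix of the place-permutation action of `s ∈ 𝔖_m`. -/
noncomputable def PsiMat {N m : ℕ} (s : Equiv.Perm (Fin m)) :
    Matrix (Fin m → Fin N) (Fin m → Fin N) ℂ :=
  fun k q => if q = k ∘ s then 1 else 0

/-- The index `k` has support exactly `I` (i.e. the corresponding basis vector of the
enhanced tensor power lies in `V̲_I^{⊗r}`). -/
def isSupp {n r : ℕ} (I : Finset (Fin r)) (k : Fin r → Fin (n + 1)) : Prop :=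
  ∀ i, i ∈ I ↔ k i ≠ Fin.last n

/-- The number of tensor factors of the basis index `k` coming from `V` (and not `η`). -/
def levelOf {n r : ℕ} (k : Fin r → Fin (n + 1)) : ℕ :=
  (Finset.univ.filter fun i => k i ≠ Fin.last n).card

/-- The basis index of `V̲_I^{⊗r}` whose `V`-entries are given by `a : Fin l → Fin n`,
arranged along the increasing enumeration of `I`. -/
noncomputable def emb {n r l : ℕ} (I : Finset (Fin r)) (hI : I.card = l)
    (a : Fin l → Fin n) : Fin r → Fin (n + 1) :=
  fun i => if h : i ∈ I then Fin.castSucc (a ((I.orderIsoOfFin hI).symm ⟨i, h⟩)) else Fin.last n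

/-- The operator `σ^I` acting as `σ = A` on `V̲_I^{⊗r} ≅ V^{⊗l}` and as `0` on every other
summand `V̲_K^{⊗r}`. -/
noncomputable def opMat {n r l : ℕ} (I : Finset (Fin r)) (hI : I.card = l)
    (A : Matrix (Fin l → Fin n) (Fin l → Fin n) ℂ) :
    Matrix (Fin r → Fin (n + 1)) (Fin r → Fin (n + 1)) ℂ :=
  fun k q => ∑ a : Fin l → Fin n, ∑ b : Fin l → Fin n,
    if k = emb I hI a ∧ q = emb I hI b then A a b else 0

/-- The operator `E_{I,J}`: the order-preserving place permutation carrying `V̲_J^{⊗r}`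
onto `V̲_I^{⊗r}`, extended by zero on all other summands. -/
noncomputable def EMat {n r l : ℕ} (I J : Finset (Fin r)) (hI : I.card = l)
    (hJ : J.card = l) :
    Matrix (Fin r → Fin (n + 1)) (Fin r → Fin (n + 1)) ℂ :=
  fun k q => ∑ a : Fin l → Fin n, if k = emb I hI a ∧ q = emb J hJ a then 1 else 0

/-- The Brauer algebra `B_l(εn) = End_G(V^{⊗l})`: all matrices commuting with the diagonal
action of the isometry group `G` of the form with matrix `Q`. -/
def BrauerSet (n l : ℕ) (Q : Matrix (Fin n) (Fin n) ℂ) :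
    Set (Matrix (Fin l → Fin n) (Fin l → Fin n) ℂ) :=
  {A | ∀ g : Matrix (Fin n) (Fin n) ℂ, gᵀ * Q * g = Q → PhiMat g * A = A * PhiMat g}

/-- The matrix on `V̲ = V ⊕ ℂη = ℂ^{n+1}` of the element `(g, v)` of the enhanced group
`G̲ = G ×_ρ V`: it acts as `g` on `V` and sends `η` to `v + η`. -/
noncomputable def encMat {n : ℕ} (g : Matrix (Fin n) (Fin n) ℂ) (v : Fin n → ℂ) :
    Matrix (Fin (n + 1)) (Fin (n + 1)) ℂ :=
  fun i j =>
    if hi : (i : ℕ) < n then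
      (if hj : (j : ℕ) < n then g ⟨i, hi⟩ ⟨j, hj⟩ else v ⟨i, hi⟩)
    else (if (j : ℕ) < n then 0 else 1)

/-- The matrix on `V̲` of a torus element `c ∈ 𝔾_m`: identity on `V` and `c` on `η`. -/
noncomputable def torMat (n : ℕ) (c : ℂ) : Matrix (Fin (n + 1)) (Fin (n + 1)) ℂ :=
  Matrix.diagonal (fun i => if (i : ℕ) < n then 1 else c)

open scoped Classical
/-- Lift a matrix on `Fin n` to `Fin (n+1)` by zero on the `η`-index. -/
noncomputable def ext {n : ℕ} (B : Matrix (Fin n) (Fin n) ℂ) :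
    Matrix (Fin (n + 1)) (Fin (n + 1)) ℂ :=
  fun a b =>
    if ha : (a : ℕ) < n then (if hb : (b : ℕ) < n then B ⟨a, ha⟩ ⟨b, hb⟩ else 0) else 0

/-- The operator `ρ_I(τ_z)` on `V̲^{⊗r}`: the Brauer diagram `z` is encoded by the
involution `w` whose 2-cycles are its bars; it acts by the contraction–expansion operators
of `z` on `V̲_I^{⊗r}` when all bar indices of `z` lie in `I`, and is `0` otherwise; it
annihilates `V̲_K^{⊗r}` for `K ≠ I`.  Here `B` is the matrix of the form and `d` the dual
basis matrix. -/
noncomputable def tauEnhMat {n r : ℕ} (B d : Matrix (Fin n) (Fin n) ℂ)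
    (I : Finset (Fin r)) (w : Equiv.Perm (Fin r)) :
    Matrix (Fin r → Fin (n + 1)) (Fin r → Fin (n + 1)) ℂ :=
  fun k q =>
    if (∀ i, w i ≠ i → i ∈ I) ∧ isSupp I k ∧ isSupp I q then
      (∏ i : Fin r, if i < w i then ext d (k i) (k (w i)) else 1) *
        ∏ i : Fin r, if w i = i then (if q i = k i then 1 else 0)
          else if i < w i then ext B (q i) (q (w i)) else 1
    else 0

/-- `ρ_I(δ)` for `δ = ∑_{s,z} c_{s,z} Ψ|_r(s) τ_z ∈ B_r(εn)` expressed through its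
coefficients `c` on the basis `{Ψ|_r(s) τ_z}` (with `z` ranging over involutions of
`{1,…,r}`): `ρ_I(Ψ|_r(s) τ_z) = Ψ(s) ∘ ρ_I(τ_z)`, extended linearly. -/
noncomputable def rhoI {n r : ℕ} (B d : Matrix (Fin n) (Fin n) ℂ) (I : Finset (Fin r))
    (c : Equiv.Perm (Fin r) × Equiv.Perm (Fin r) → ℂ) :
    Matrix (Fin r → Fin (n + 1)) (Fin r → Fin (n + 1)) ℂ :=
  ∑ s : Equiv.Perm (Fin r), ∑ w : Equiv.Perm (Fin r),
    (if w * w = 1 then c (s, w) else 0) • (PsiMat (N := n + 1) s * tauEnhMat B d I w)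

/-- `ρ(δ) = ∑_{I ⊆ {1,…,r}} ρ_I(δ)`. -/
noncomputable def rho {n r : ℕ} (B d : Matrix (Fin n) (Fin n) ℂ)
    (c : Equiv.Perm (Fin r) × Equiv.Perm (Fin r) → ℂ) :
    Matrix (Fin r → Fin (n + 1)) (Fin r → Fin (n + 1)) ℂ :=
  ∑ I : Finset (Fin r), rhoI B d I c


section Aux

variable {n r : ℕ}

private lemma castSucc_ne_last (b : Fin n) : Fin.castSucc b ≠ Fin.last n := by
  exact Fin.ne_of_lt (Fin.castSucc_lt_last b)

/-- single-coordinate update by a `V`-value -/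
private noncomputable def upd (q₀ : Fin r → Fin (n + 1)) (j : Fin r) (a : Fin n) :
    Fin r → Fin (n + 1) :=
  Function.update q₀ j (Fin.castSucc a)

private lemma upd_same (q₀ : Fin r → Fin (n + 1)) (j : Fin r) (a : Fin n) :
    upd q₀ j a j = Fin.castSucc a := by simp [upd]

private lemma upd_ne (q₀ : Fin r → Fin (n + 1)) (j : Fin r) (a : Fin n) {i : Fin r}
    (h : i ≠ j) : upd q₀ j a i = q₀ i := by simp [upd, Function.update_of_ne h]

private lemma supp_unique {I I' : Finset (Fin r)} {p : Fin r → Fin (n + 1)}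
    (h : isSupp I p) (h' : isSupp I' p) : I = I' := by
  ext i; rw [h i, h' i]

private lemma isSupp_upd {J : Finset (Fin r)} {q₀ : Fin r → Fin (n + 1)}
    (hq : isSupp J q₀) {j : Fin r} (hj : j ∉ J) (a : Fin n) :
    isSupp (insert j J) (upd q₀ j a) := by
  intro i
  rcases eq_or_ne i j with rfl | hij
  · simp [upd_same, castSucc_ne_last]
  · rw [upd_ne _ _ _ hij]
    simp only [Finset.mem_insert, hij, false_or]
    exact hq i

private lemma psi_mul_apply (s : Equiv.Perm (Fin r))
    (M : Matrix (Fin r → Fin (n + 1)) (Fin r → Fin (n + 1)) ℂ)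
    (k q : Fin r → Fin (n + 1)) :
    (PsiMat (N := n + 1) s * M) k q = M (k ∘ s) q := by
  rw [Matrix.mul_apply]
  simp only [PsiMat, ite_mul, one_mul, zero_mul]
  rw [Finset.sum_ite_eq' Finset.univ (k ∘ s) (fun k' => M k' q)]
  simp

private lemma tau_apply_of_not_supp (B d : Matrix (Fin n) (Fin n) ℂ) {I : Finset (Fin r)}
    (w : Equiv.Perm (Fin r)) (k : Fin r → Fin (n + 1)) {q : Fin r → Fin (n + 1)}
    (h : ¬ isSupp I q) : tauEnhMat B d I w k q = 0 := by
  rw [tauEnhMat, if_neg]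
  rintro ⟨-, -, h'⟩; exact h h'

/-- entry of `ρ(δ)` at a column whose support is known -/
private lemma rho_apply_of_supp (B d : Matrix (Fin n) (Fin n) ℂ)
    (c : Equiv.Perm (Fin r) × Equiv.Perm (Fin r) → ℂ) {Ip : Finset (Fin r)}
    (k : Fin r → Fin (n + 1)) {p : Fin r → Fin (n + 1)} (hp : isSupp Ip p) :
    rho B d c k p = ∑ s : Equiv.Perm (Fin r), ∑ w : Equiv.Perm (Fin r),
      (if w * w = 1 then c (s, w) else 0) * tauEnhMat B d Ip w (k ∘ s) p := by
  rw [rho, Matrix.sum_apply]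
  rw [Finset.sum_eq_single Ip]
  · rw [rhoI, Matrix.sum_apply]
    refine Finset.sum_congr rfl fun s _ => ?_
    rw [Matrix.sum_apply]
    refine Finset.sum_congr rfl fun w _ => ?_
    rw [Matrix.smul_apply, smul_eq_mul, psi_mul_apply]
  · intro I _ hI
    rw [rhoI, Matrix.sum_apply]
    refine Finset.sum_eq_zero fun s _ => ?_
    rw [Matrix.sum_apply]
    refine Finset.sum_eq_zero fun w _ => ?_
    rw [Matrix.smul_apply, smul_eq_mul, psi_mul_apply,
      tau_apply_of_not_supp _ _ _ _ (fun h => hI (supp_unique h hp)), mul_zero]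
  · intro h; exact absurd (Finset.mem_univ Ip) h

end Aux

section Aux2

variable {n r : ℕ}

private lemma last_of_not_lt {x : Fin (n + 1)} (h : ¬ (x : ℕ) < n) : x = Fin.last n := by
  have := x.isLt
  apply Fin.ext
  simp only [Fin.val_last]
  omega

private lemma ne_last_iff_lt {x : Fin (n + 1)} : x ≠ Fin.last n ↔ (x : ℕ) < n :=
  ⟨Fin.val_lt_last, fun h he => by rw [he, Fin.val_last] at h; exact lt_irrefl _ h⟩

/-- the matrix coefficient `E p` of `Φ(e^{e_a})` -/
private noncomputable def Ee (q₀ : Fin r → Fin (n + 1)) (a : Fin n)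
    (p : Fin r → Fin (n + 1)) : ℂ :=
  PhiMat (encMat 1 (fun i => if i = a then (1 : ℂ) else 0)) p q₀

/-- number of new `V`-slots of `p` relative to `q₀` -/
private noncomputable def mm (q₀ p : Fin r → Fin (n + 1)) : ℕ :=
  (Finset.univ.filter fun i => q₀ i = Fin.last n ∧ p i ≠ Fin.last n).card

private lemma phi_pow (q₀ : Fin r → Fin (n + 1)) (a : Fin n) (p : Fin r → Fin (n + 1))
    (t : ℂ) :
    PhiMat (encMat 1 (fun i => if i = a then t else 0)) p q₀
      = t ^ mm q₀ p * Ee q₀ a p := by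
  have key : ∀ i : Fin r,
      encMat 1 (fun i => if i = a then t else 0) (p i) (q₀ i)
        = (if (q₀ i = Fin.last n ∧ p i ≠ Fin.last n) then t else 1) *
            encMat 1 (fun i => if i = a then (1 : ℂ) else 0) (p i) (q₀ i) := by
    intro i
    by_cases h2 : (↑(q₀ i) : ℕ) < n
    · rw [if_neg (fun hc => (ne_last_iff_lt.mpr h2) hc.1), one_mul]
      by_cases h1 : (↑(p i) : ℕ) < n
      · rw [encMat, encMat]; rw [dif_pos h1, dif_pos h1, dif_pos h2, dif_pos h2]
      · rw [encMat, encMat]; rw [dif_neg h1, dif_neg h1]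
    · by_cases h1 : (↑(p i) : ℕ) < n
      · rw [if_pos ⟨last_of_not_lt h2, ne_last_iff_lt.mpr h1⟩]
        rw [encMat, encMat]; rw [dif_pos h1, dif_pos h1, dif_neg h2, dif_neg h2]
        split_ifs <;> ring
      · rw [if_neg (fun hc => hc.2 (last_of_not_lt h1)), one_mul]
        rw [encMat, encMat]; rw [dif_neg h1, dif_neg h1]
  rw [PhiMat, Ee, PhiMat]
  rw [Finset.prod_congr rfl (fun i _ => key i), Finset.prod_mul_distrib]
  congr 1
  rw [Finset.prod_ite, Finset.prod_const, Finset.prod_const_one, mul_one, mm]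

private lemma Ee_upd {J : Finset (Fin r)} {q₀ : Fin r → Fin (n + 1)}
    (hq : isSupp J q₀) {j₀ : Fin r} (hj₀ : j₀ ∉ J) (a : Fin n) :
    Ee q₀ a (upd q₀ j₀ a) = 1 := by
  have hqj : q₀ j₀ = Fin.last n := not_not.mp (fun h => hj₀ ((hq j₀).mpr h))
  rw [Ee, PhiMat]
  apply Finset.prod_eq_one
  intro i _
  rcases eq_or_ne i j₀ with rfl | hne
  · rw [upd_same, hqj, encMat]
    rw [dif_pos (show ((Fin.castSucc a : Fin (n+1)) : ℕ) < n from a.isLt)]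
    rw [dif_neg (show ¬ ((Fin.last n : Fin (n+1)) : ℕ) < n by simp)]
    rw [if_pos]
    apply Fin.ext
    simp
  · rw [upd_ne _ _ _ hne, encMat]
    by_cases h2 : (↑(q₀ i) : ℕ) < n
    · rw [dif_pos h2, dif_pos h2, Matrix.one_apply_eq]
    · rw [dif_neg h2, if_neg h2]

private lemma mm_upd {J : Finset (Fin r)} {q₀ : Fin r → Fin (n + 1)}
    (hq : isSupp J q₀) {j₀ : Fin r} (hj₀ : j₀ ∉ J) (a : Fin n) :
    mm q₀ (upd q₀ j₀ a) = 1 := by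
  have hqj : q₀ j₀ = Fin.last n := not_not.mp (fun h => hj₀ ((hq j₀).mpr h))
  rw [mm]
  have : (Finset.univ.filter fun i => q₀ i = Fin.last n ∧ upd q₀ j₀ a i ≠ Fin.last n)
      = {j₀} := by
    ext i
    simp only [Finset.mem_filter, Finset.mem_univ, true_and, Finset.mem_singleton]
    constructor
    · rintro ⟨h1, h2⟩
      by_contra hne
      rw [upd_ne _ _ _ hne] at h2
      exact h2 h1
    · rintro rfl
      exact ⟨hqj, by rw [upd_same]; exact castSucc_ne_last a⟩
  rw [this, Finset.card_singleton]

private lemma Ee_zero {J : Finset (Fin r)} {q₀ : Fin r → Fin (n + 1)}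
    (hq : isSupp J q₀) (a : Fin n) {p : Fin r → Fin (n + 1)}
    (hm : mm q₀ p = 1) (hex : ∀ j ∈ Jᶜ, p ≠ upd q₀ j a) :
    Ee q₀ a p = 0 := by
  obtain ⟨i₀, hfil⟩ := Finset.card_eq_one.mp hm
  have hi₀ : q₀ i₀ = Fin.last n ∧ p i₀ ≠ Fin.last n := by
    have := hfil ▸ Finset.mem_singleton_self i₀
    exact (Finset.mem_filter.mp this).2
  have hi₀J : i₀ ∉ J := fun h => ((hq i₀).mp h) hi₀.1
  have hne := hex i₀ (Finset.mem_compl.mpr hi₀J)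
  obtain ⟨iS, hiS⟩ := Function.ne_iff.mp hne
  rw [Ee, PhiMat]
  apply Finset.prod_eq_zero (Finset.mem_univ iS)
  rcases eq_or_ne iS i₀ with rfl | hneS
  · rw [upd_same] at hiS
    rw [hi₀.1, encMat]
    rw [dif_pos (Fin.val_lt_last hi₀.2)]
    rw [dif_neg (show ¬ ((Fin.last n : Fin (n+1)) : ℕ) < n by simp)]
    rw [if_neg]
    intro he
    apply hiS
    apply Fin.ext
    rw [Fin.coe_castSucc, ← he]
  · have hpq : p iS ≠ q₀ iS := by rw [upd_ne _ _ _ hneS] at hiS; exact hiS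
    by_cases h2 : (↑(q₀ iS) : ℕ) < n
    · by_cases h1 : (↑(p iS) : ℕ) < n
      · rw [encMat]
        rw [dif_pos h1, dif_pos h2, Matrix.one_apply, if_neg]
        intro he
        simp only [Fin.mk.injEq] at he
        exact hpq (Fin.ext he)
      · rw [encMat]; rw [dif_neg h1, if_pos h2]
    · exfalso
      have hql := last_of_not_lt h2
      have hpl : p iS ≠ Fin.last n := fun hl => hpq (hl.trans hql.symm)
      have hmem : iS ∈ Finset.univ.filter
          (fun i => q₀ i = Fin.last n ∧ p i ≠ Fin.last n) :=
        Finset.mem_filter.mpr ⟨Finset.mem_univ _, hql, hpl⟩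
      rw [hfil] at hmem
      exact hneS (Finset.mem_singleton.mp hmem)

/-- The degree-one identity extracted from the hypothesis. -/
private lemma Fid (B dd : Matrix (Fin n) (Fin n) ℂ)
    (c : Equiv.Perm (Fin r) × Equiv.Perm (Fin r) → ℂ) {J : Finset (Fin r)}
    {q₀ : Fin r → Fin (n + 1)} (hq : isSupp J q₀)
    (hyp : ∀ w : Fin n → ℂ, ∀ x : (Fin r → Fin (n + 1)) → ℂ,
      (∀ k, ¬ isSupp J k → x k = 0) →
      (rho B dd c).mulVec ((PhiMat (m := r) (encMat 1 w)).mulVec x - x) = 0)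
    (k' : Fin r → Fin (n + 1)) (a : Fin n) :
    ∑ j ∈ Jᶜ, rho B dd c k' (upd q₀ j a) = 0 := by
  classical
  set x : (Fin r → Fin (n + 1)) → ℂ := fun p => if p = q₀ then 1 else 0 with hxdef
  have hx : ∀ p, ¬ isSupp J p → x p = 0 := by
    intro p hp
    rw [hxdef]
    refine if_neg (fun he => hp ?_)
    rw [he]
    exact hq
  have h0 : ∀ t : ℂ, ∑ p : Fin r → Fin (n + 1),
      rho B dd c k' p * (t ^ mm q₀ p * Ee q₀ a p - x p) = 0 := by
    intro t
    have h := congrFun (hyp (fun i => if i = a then t else 0) x hx) k'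
    simp only [Matrix.mulVec, dotProduct, Pi.sub_apply, Pi.zero_apply] at h
    rw [← h]
    refine Finset.sum_congr rfl fun p _ => ?_
    congr 2
    rw [← phi_pow q₀ a p t]
    rw [hxdef]
    simp only [mul_ite, mul_one, mul_zero]
    rw [Finset.sum_ite_eq' Finset.univ q₀
      (fun p' => PhiMat (encMat 1 fun i => if i = a then t else 0) p p')]
    simp
  set P : Polynomial ℂ :=
    (∑ p : Fin r → Fin (n + 1),
      Polynomial.C (rho B dd c k' p * Ee q₀ a p) * Polynomial.X ^ (mm q₀ p))
      - Polynomial.C (rho B dd c k' q₀) with hPdef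
  have hPeval : ∀ t : ℂ, P.eval t = 0 := by
    intro t
    have h1 := h0 t
    rw [hPdef]
    simp only [Polynomial.eval_sub, Polynomial.eval_finset_sum, Polynomial.eval_mul,
      Polynomial.eval_C, Polynomial.eval_pow, Polynomial.eval_X]
    have h2 : ∑ p : Fin r → Fin (n + 1), rho B dd c k' p * x p = rho B dd c k' q₀ := by
      rw [hxdef]
      simp only [mul_ite, mul_one, mul_zero]
      rw [Finset.sum_ite_eq' Finset.univ q₀ (fun p => rho B dd c k' p)]
      simp
    calc (∑ p : Fin r → Fin (n + 1),
            rho B dd c k' p * Ee q₀ a p * t ^ mm q₀ p) - rho B dd c k' q₀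
        = ∑ p : Fin r → Fin (n + 1),
            rho B dd c k' p * (t ^ mm q₀ p * Ee q₀ a p - x p) := by
          rw [← h2, ← Finset.sum_sub_distrib]
          refine Finset.sum_congr rfl fun p _ => ?_
          ring
      _ = 0 := h1
  have hP0 : P = 0 := Polynomial.funext (fun t => by rw [hPeval]; simp)
  have hc1 : P.coeff 1 = 0 := by rw [hP0]; simp
  rw [hPdef] at hc1
  rw [Polynomial.coeff_sub, Polynomial.finset_sum_coeff] at hc1
  simp only [Polynomial.coeff_C_mul, Polynomial.coeff_X_pow, Polynomial.coeff_C,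
    one_ne_zero, if_false, sub_zero] at hc1
  have key : ∀ p : Fin r → Fin (n + 1),
      rho B dd c k' p * Ee q₀ a p * (if (1 : ℕ) = mm q₀ p then 1 else 0)
        = ∑ j ∈ Jᶜ, (if p = upd q₀ j a then rho B dd c k' p else 0) := by
    intro p
    by_cases hex : ∃ j ∈ Jᶜ, p = upd q₀ j a
    · obtain ⟨j₀, hj₀mem, rfl⟩ := hex
      have hj₀ : j₀ ∉ J := Finset.mem_compl.mp hj₀mem
      rw [Finset.sum_eq_single j₀]
      · rw [if_pos rfl, mm_upd hq hj₀ a, Ee_upd hq hj₀ a, if_pos rfl]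
        ring
      · intro j hjm hne
        rw [if_neg]
        intro he
        have h1 : upd q₀ j₀ a j = upd q₀ j a j := by rw [← he]
        rw [upd_same] at h1
        rw [upd_ne _ _ _ (fun h : j = j₀ => hne h)] at h1
        have hqj : q₀ j = Fin.last n :=
          not_not.mp (fun h => (Finset.mem_compl.mp hjm) ((hq j).mpr h))
        rw [hqj] at h1
        exact castSucc_ne_last a h1.symm
      · intro h; exact absurd hj₀mem h
    · push_neg at hex
      rw [Finset.sum_eq_zero (fun j hj => if_neg (hex j hj))]
      by_cases hm : (1 : ℕ) = mm q₀ p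
      · rw [Ee_zero hq a hm.symm hex]
        ring
      · rw [if_neg hm]
        ring
  rw [Finset.sum_congr rfl (fun p _ => key p)] at hc1
  rw [Finset.sum_comm] at hc1
  rw [← hc1]
  refine Finset.sum_congr rfl fun j _ => ?_
  rw [Finset.sum_ite_eq' Finset.univ (upd q₀ j a) (fun p => rho B dd c k' p)]
  simp

end Aux2

section Aux3

variable {n r : ℕ}

/-- `e`-type generator -/
private noncomputable def egen (k₀ : Fin r → Fin (n + 1)) (t : Fin r) : Fin n → ℂ :=
  fun a => if (Fin.castSucc a : Fin (n + 1)) = k₀ t then 1 else 0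

/-- `Q`-column type generator -/
private noncomputable def qgen (Q : Matrix (Fin n) (Fin n) ℂ)
    (q₀ : Fin r → Fin (n + 1)) (i : Fin r) : Fin n → ℂ :=
  fun a => ext Q (Fin.castSucc a) (q₀ i)

/-- the finite generating set of the small subspace -/
private noncomputable def gens (Q : Matrix (Fin n) (Fin n) ℂ) (J : Finset (Fin r))
    (k₀ q₀ : Fin r → Fin (n + 1)) : Finset (Fin n → ℂ) :=
  (Finset.univ.filter fun t => k₀ t ≠ Fin.last n).image (egen k₀) ∪ J.image (qgen Q q₀)

private lemma perm_invol {w : Equiv.Perm (Fin r)} (hw : w * w = 1) :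
    ∀ i, w (w i) = i := by
  intro i
  have h : (w * w) i = (1 : Equiv.Perm (Fin r)) i := by rw [hw]
  simpa using h

/-- Case A: the diagonal term. -/
private lemma termA (Q d : Matrix (Fin n) (Fin n) ℂ) {J : Finset (Fin r)}
    {q₀ k₀ : Fin r → Fin (n + 1)} {t₀ : Fin r} (hq : isSupp J q₀)
    (ht₀ : k₀ t₀ = Fin.last n) {j : Fin r} {s w : Equiv.Perm (Fin r)} (hj : j ∉ J)
    (hw : w * w = 1) (hsj : s j = t₀) (hwj : w j = j) (a b : Fin n) :
    tauEnhMat Q d (insert j J) w ((upd k₀ t₀ b) ∘ s) (upd q₀ j a)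
      = (if a = b then 1 else 0) * tauEnhMat Q d J w (k₀ ∘ s) q₀ := by
  classical
  have hwinv := perm_invol hw
  have hsne : ∀ {i : Fin r}, i ≠ j → s i ≠ t₀ := by
    intro i h hti
    exact h (s.injective (hti.trans hsj.symm))
  have hqj : q₀ j = Fin.last n := not_not.mp (fun h => hj ((hq j).mpr h))
  have hwnej : ∀ {i : Fin r}, i ≠ j → w i ≠ j := by
    intro i h hwi
    exact h (by rw [← hwinv i, hwi, hwj])
  have hcond : ((∀ i, w i ≠ i → i ∈ insert j J)
        ∧ isSupp (insert j J) ((upd k₀ t₀ b) ∘ s) ∧ isSupp (insert j J) (upd q₀ j a))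
      ↔ ((∀ i, w i ≠ i → i ∈ J) ∧ isSupp J (k₀ ∘ s) ∧ isSupp J q₀) := by
    constructor
    · rintro ⟨h1, h2, -⟩
      refine ⟨?_, ?_, hq⟩
      · intro i hi
        rcases Finset.mem_insert.mp (h1 i hi) with rfl | h
        · exact absurd hwj hi
        · exact h
      · intro i
        rcases eq_or_ne i j with rfl | hij
        · simp only [Function.comp_apply, hsj, ht₀]
          constructor
          · intro h; exact absurd h hj
          · intro h; exact absurd rfl h
        · have := h2 i
          simp only [Function.comp_apply, Finset.mem_insert, hij, false_or] at this ⊢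
          rw [upd_ne _ _ _ (hsne hij)] at this
          exact this
    · rintro ⟨h1, h2, -⟩
      refine ⟨?_, ?_, isSupp_upd hq hj a⟩
      · intro i hi
        exact Finset.mem_insert_of_mem (h1 i hi)
      · intro i
        rcases eq_or_ne i j with rfl | hij
        · simp only [Function.comp_apply, hsj, upd_same]
          simp [castSucc_ne_last]
        · have := h2 i
          simp only [Function.comp_apply] at this ⊢
          rw [upd_ne _ _ _ (hsne hij), Finset.mem_insert]
          simp [hij, this]
  rw [tauEnhMat, tauEnhMat]
  by_cases h : ((∀ i, w i ≠ i → i ∈ J) ∧ isSupp J (k₀ ∘ s) ∧ isSupp J q₀)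
  · rw [if_pos (hcond.mpr h), if_pos h]
    have hD : (∏ i : Fin r, if i < w i
          then ext d (((upd k₀ t₀ b) ∘ s) i) (((upd k₀ t₀ b) ∘ s) (w i)) else 1)
        = ∏ i : Fin r, if i < w i then ext d ((k₀ ∘ s) i) ((k₀ ∘ s) (w i)) else 1 := by
      refine Finset.prod_congr rfl fun i _ => ?_
      by_cases hlt : i < w i
      · have hij : i ≠ j := by
          intro he; rw [he, hwj] at hlt; exact lt_irrefl _ hlt
        rw [if_pos hlt, if_pos hlt]
        simp only [Function.comp_apply]
        rw [upd_ne _ _ _ (hsne hij), upd_ne _ _ _ (hsne (hwnej hij))]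
      · rw [if_neg hlt, if_neg hlt]
    rw [hD]
    rw [← Finset.mul_prod_erase Finset.univ
      (fun i => if w i = i then (if upd q₀ j a i = ((upd k₀ t₀ b) ∘ s) i then 1 else 0)
        else if i < w i then ext Q (upd q₀ j a i) (upd q₀ j a (w i)) else 1)
      (Finset.mem_univ j)]
    rw [← Finset.mul_prod_erase Finset.univ
      (fun i => if w i = i then (if q₀ i = (k₀ ∘ s) i then 1 else 0)
        else if i < w i then ext Q (q₀ i) (q₀ (w i)) else 1)
      (Finset.mem_univ j)]
    have hfj : (if w j = j then (if upd q₀ j a j = ((upd k₀ t₀ b) ∘ s) j then 1 else 0)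
        else if j < w j then ext Q (upd q₀ j a j) (upd q₀ j a (w j)) else 1)
        = (if a = b then (1 : ℂ) else 0) := by
      rw [if_pos hwj]
      simp only [Function.comp_apply, hsj, upd_same]
      simp [Fin.castSucc_inj]
    have hfj' : (if w j = j then (if q₀ j = (k₀ ∘ s) j then 1 else 0)
        else if j < w j then ext Q (q₀ j) (q₀ (w j)) else 1) = (1 : ℂ) := by
      rw [if_pos hwj]
      simp only [Function.comp_apply, hsj, ht₀, hqj]
      simp
    have hrest : ∏ i ∈ Finset.univ.erase j,
        (if w i = i then (if upd q₀ j a i = ((upd k₀ t₀ b) ∘ s) i then 1 else 0)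
          else if i < w i then ext Q (upd q₀ j a i) (upd q₀ j a (w i)) else 1)
        = ∏ i ∈ Finset.univ.erase j,
        (if w i = i then (if q₀ i = (k₀ ∘ s) i then 1 else 0)
          else if i < w i then ext Q (q₀ i) (q₀ (w i)) else 1) := by
      refine Finset.prod_congr rfl fun i hi => ?_
      have hij : i ≠ j := Finset.ne_of_mem_erase hi
      by_cases hfix : w i = i
      · rw [if_pos hfix, if_pos hfix]
        simp only [Function.comp_apply]
        simp only [upd_ne _ _ _ hij, upd_ne _ _ _ (hsne hij)]
      · rw [if_neg hfix, if_neg hfix]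
        by_cases hlt : i < w i
        · rw [if_pos hlt, if_pos hlt, upd_ne _ _ _ hij, upd_ne _ _ _ (hwnej hij)]
        · rw [if_neg hlt, if_neg hlt]
    rw [hfj, hfj', hrest]
    ring
  · rw [if_neg (fun hc => h (hcond.mp hc)), if_neg h, mul_zero]

end Aux3

section Aux4

variable {n r : ℕ}

private lemma castSucc_val_lt (a : Fin n) : ((Fin.castSucc a : Fin (n + 1)) : ℕ) < n := by
  simpa using a.isLt

/-- Case B: off-diagonal terms factor as `u a * v b` with `u` in the small space. -/
private lemma termB (Q d : Matrix (Fin n) (Fin n) ℂ) (hQe : Qᵀ = Q ∨ Qᵀ = -Q)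
    {J : Finset (Fin r)} {q₀ k₀ : Fin r → Fin (n + 1)} {t₀ : Fin r}
    (hq : isSupp J q₀) (ht₀ : k₀ t₀ = Fin.last n)
    {j : Fin r} {s w : Equiv.Perm (Fin r)} (hj : j ∉ J) (hw : w * w = 1)
    (hnA : ¬ (s j = t₀ ∧ w j = j)) :
    ∃ u ∈ Submodule.span ℂ ((gens Q J k₀ q₀ : Finset (Fin n → ℂ)) : Set (Fin n → ℂ)),
      ∃ v : Fin n → ℂ, ∀ a b,
        tauEnhMat Q d (insert j J) w ((upd k₀ t₀ b) ∘ s) (upd q₀ j a) = u a * v b := by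
  classical
  have hwinv := perm_invol hw
  have hcond : ∀ (a b : Fin n),
      ((∀ i, w i ≠ i → i ∈ insert j J)
        ∧ isSupp (insert j J) ((upd k₀ t₀ b) ∘ s) ∧ isSupp (insert j J) (upd q₀ j a))
      ↔ ((∀ i, w i ≠ i → i ∈ insert j J)
        ∧ (∀ i, i ∈ insert j J ↔ (s i = t₀ ∨ k₀ (s i) ≠ Fin.last n))) := by
    intro a b
    have hsupp_iff : isSupp (insert j J) ((upd k₀ t₀ b) ∘ s)
        ↔ (∀ i, i ∈ insert j J ↔ (s i = t₀ ∨ k₀ (s i) ≠ Fin.last n)) := by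
      constructor
      · intro h2 i
        rw [h2 i]
        simp only [Function.comp_apply]
        by_cases hst : s i = t₀
        · rw [hst, upd_same]
          simp [castSucc_ne_last, hst]
        · rw [upd_ne _ _ _ hst]
          simp [hst]
      · intro h2 i
        rw [h2 i]
        simp only [Function.comp_apply]
        by_cases hst : s i = t₀
        · rw [hst, upd_same]
          simp [castSucc_ne_last, hst]
        · rw [upd_ne _ _ _ hst]
          simp [hst]
    constructor
    · rintro ⟨h1, h2, -⟩
      exact ⟨h1, hsupp_iff.mp h2⟩
    · rintro ⟨h1, h2⟩
      exact ⟨h1, hsupp_iff.mpr h2, isSupp_upd hq hj a⟩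
  by_cases hCf : ((∀ i, w i ≠ i → i ∈ insert j J)
      ∧ (∀ i, i ∈ insert j J ↔ (s i = t₀ ∨ k₀ (s i) ≠ Fin.last n)))
  swap
  · refine ⟨0, Submodule.zero_mem _, 0, fun a b => ?_⟩
    rw [tauEnhMat, if_neg (fun hc => hCf ((hcond a b).mp hc))]
    simp
  obtain ⟨hbar, hsupp⟩ := hCf
  have finish : ∀ (i₁ : Fin r) (u : Fin n → ℂ),
      u ∈ Submodule.span ℂ ((gens Q J k₀ q₀ : Finset (Fin n → ℂ)) : Set (Fin n → ℂ)) →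
      (∀ a b : Fin n, (if w i₁ = i₁
          then (if upd q₀ j a i₁ = ((upd k₀ t₀ b) ∘ s) i₁ then (1 : ℂ) else 0)
          else if i₁ < w i₁ then ext Q (upd q₀ j a i₁) (upd q₀ j a (w i₁)) else 1) = u a) →
      (∀ i, i ≠ i₁ → (w i = i → i ≠ j) ∧ (i < w i → i ≠ j ∧ w i ≠ j)) →
      ∃ u' ∈ Submodule.span ℂ ((gens Q J k₀ q₀ : Finset (Fin n → ℂ)) : Set (Fin n → ℂ)),
        ∃ v : Fin n → ℂ, ∀ a b,
          tauEnhMat Q d (insert j J) w ((upd k₀ t₀ b) ∘ s) (upd q₀ j a) = u' a * v b := by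
    intro i₁ u hu hfac hside
    refine ⟨u, hu, fun b =>
      (∏ i : Fin r, if i < w i
        then ext d (((upd k₀ t₀ b) ∘ s) i) (((upd k₀ t₀ b) ∘ s) (w i)) else 1)
      * ∏ i ∈ Finset.univ.erase i₁,
        (if w i = i then (if q₀ i = ((upd k₀ t₀ b) ∘ s) i then 1 else 0)
          else if i < w i then ext Q (q₀ i) (q₀ (w i)) else 1), fun a b => ?_⟩
    rw [tauEnhMat, if_pos ((hcond a b).mpr ⟨hbar, hsupp⟩)]
    rw [← Finset.mul_prod_erase Finset.univ
      (fun i => if w i = i then (if upd q₀ j a i = ((upd k₀ t₀ b) ∘ s) i then 1 else 0)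
        else if i < w i then ext Q (upd q₀ j a i) (upd q₀ j a (w i)) else 1)
      (Finset.mem_univ i₁)]
    rw [hfac a b]
    have hrest : ∏ i ∈ Finset.univ.erase i₁,
        (if w i = i then (if upd q₀ j a i = ((upd k₀ t₀ b) ∘ s) i then 1 else 0)
          else if i < w i then ext Q (upd q₀ j a i) (upd q₀ j a (w i)) else 1)
        = ∏ i ∈ Finset.univ.erase i₁,
        (if w i = i then (if q₀ i = ((upd k₀ t₀ b) ∘ s) i then 1 else 0)
          else if i < w i then ext Q (q₀ i) (q₀ (w i)) else 1) := by
      refine Finset.prod_congr rfl fun i hi => ?_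
      have hii₁ : i ≠ i₁ := Finset.ne_of_mem_erase hi
      obtain ⟨hs1, hs2⟩ := hside i hii₁
      by_cases hfix : w i = i
      · rw [if_pos hfix, if_pos hfix]
        simp only [upd_ne _ _ _ (hs1 hfix)]
      · rw [if_neg hfix, if_neg hfix]
        by_cases hlt : i < w i
        · obtain ⟨hij, hwij⟩ := hs2 hlt
          rw [if_pos hlt, if_pos hlt, upd_ne _ _ _ hij, upd_ne _ _ _ hwij]
        · rw [if_neg hlt, if_neg hlt]
    rw [hrest]
    ring
  by_cases hwj : w j = j
  · -- the δ-against-old-value case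
    have hsj : s j ≠ t₀ := fun h => hnA ⟨h, hwj⟩
    have hkj : k₀ (s j) ≠ Fin.last n :=
      (((hsupp j).mp (Finset.mem_insert_self j J))).resolve_left hsj
    refine finish j (egen k₀ (s j)) ?_ ?_ ?_
    · apply Submodule.subset_span
      refine Finset.mem_coe.mpr ?_
      rw [gens]
      exact Finset.mem_union_left _ (Finset.mem_image_of_mem _
        (Finset.mem_filter.mpr ⟨Finset.mem_univ _, hkj⟩))
    · intro a b
      rw [if_pos hwj]
      simp only [Function.comp_apply, upd_same]
      simp only [upd_ne _ _ _ hsj]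
      rfl
    · intro i hii
      exact ⟨fun _ => hii, fun _ => ⟨hii, fun hwij => hii (by rw [← hwinv i, hwij, hwj])⟩⟩
  · have hmv : w (w j) ≠ w j := by rw [hwinv]; exact fun h => hwj h.symm
    have hwjJ : w j ∈ J := by
      rcases Finset.mem_insert.mp (hbar (w j) hmv) with h | h
      · exact absurd h hwj
      · exact h
    by_cases hlt : j < w j
    · -- bar factor at `j`
      refine finish j (qgen Q q₀ (w j)) ?_ ?_ ?_
      · apply Submodule.subset_span
        refine Finset.mem_coe.mpr ?_
        rw [gens]
        exact Finset.mem_union_right _ (Finset.mem_image_of_mem _ hwjJ)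
      · intro a b
        rw [if_neg hwj, if_pos hlt, upd_same, upd_ne _ _ _ (show w j ≠ j from hwj)]
        rfl
      · intro i hii
        refine ⟨fun _ => hii, fun hlti => ⟨hii, fun hwij => ?_⟩⟩
        have he : i = w j := by rw [← hwinv i, hwij]
        rw [he, hwinv] at hlti
        exact absurd hlt (not_lt.mpr (le_of_lt hlti))
    · -- bar factor at `w j`
      have hgt : w j < j := lt_of_le_of_ne (not_lt.mp hlt) hwj
      have hjwj : w (w j) = j := hwinv j
      refine finish (w j) (fun a => ext Q (q₀ (w j)) (Fin.castSucc a)) ?_ ?_ ?_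
      · have hmem : qgen Q q₀ (w j) ∈ Submodule.span ℂ
            ((gens Q J k₀ q₀ : Finset (Fin n → ℂ)) : Set (Fin n → ℂ)) := by
          apply Submodule.subset_span
          refine Finset.mem_coe.mpr ?_
          rw [gens]
          exact Finset.mem_union_right _ (Finset.mem_image_of_mem _ hwjJ)
        rcases hQe with hsym | hskew
        · have he : (fun a => ext Q (q₀ (w j)) (Fin.castSucc a)) = qgen Q q₀ (w j) := by
            funext a
            rw [qgen, ext, ext]
            by_cases hy : (↑(q₀ (w j)) : ℕ) < n
            · rw [dif_pos hy, dif_pos (castSucc_val_lt a), dif_pos (castSucc_val_lt a),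
                dif_pos hy]
              conv_lhs => rw [← hsym]
              rw [Matrix.transpose_apply]
            · rw [dif_neg hy, dif_pos (castSucc_val_lt a), dif_neg hy]
          rw [he]; exact hmem
        · have he : (fun a => ext Q (q₀ (w j)) (Fin.castSucc a))
              = (-1 : ℂ) • qgen Q q₀ (w j) := by
            funext a
            simp only [Pi.smul_apply, smul_eq_mul, neg_one_mul]
            rw [qgen, ext, ext]
            by_cases hy : (↑(q₀ (w j)) : ℕ) < n
            · rw [dif_pos hy, dif_pos (castSucc_val_lt a), dif_pos (castSucc_val_lt a),
                dif_pos hy]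
              conv_lhs => rw [← transpose_transpose Q, hskew]
              simp [Matrix.transpose_apply]
            · rw [dif_neg hy, dif_pos (castSucc_val_lt a), dif_neg hy]
              simp
          rw [he]
          exact Submodule.smul_mem _ _ hmem
      · intro a b
        have hwwj : ¬ (w (w j) = w j) := hmv
        rw [if_neg hwwj, if_pos (show w j < w (w j) by rw [hjwj]; exact hgt), hjwj,
          upd_ne _ _ _ (show w j ≠ j from hwj), upd_same]
      · intro i hii
        constructor
        · intro hfix he
          exact hwj (he ▸ hfix)
        · intro hlti
          constructor
          · intro he
            rw [he] at hlti
            exact hlt hlti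
          · intro hwij
            exact hii (by rw [← hwinv i, hwij])

end Aux4

section Aux5

variable {n r : ℕ}

/-- the diagonal-case coefficient -/
private noncomputable def gA (Q d : Matrix (Fin n) (Fin n) ℂ)
    (c : Equiv.Perm (Fin r) × Equiv.Perm (Fin r) → ℂ) (J : Finset (Fin r))
    (q₀ k₀ : Fin r → Fin (n + 1)) (t₀ : Fin r)
    (j : Fin r) (s w : Equiv.Perm (Fin r)) : ℂ :=
  if (s j = t₀ ∧ w j = j) then
    (if w * w = 1 then c (s, w) else 0) * tauEnhMat Q d J w (k₀ ∘ s) q₀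
  else 0

set_option maxHeartbeats 4000000 in
private lemma master (Q d : Matrix (Fin n) (Fin n) ℂ) (hQe : Qᵀ = Q ∨ Qᵀ = -Q)
    (hn : 2 * r ≤ n)
    (c : Equiv.Perm (Fin r) × Equiv.Perm (Fin r) → ℂ) (J : Finset (Fin r))
    (hJ : J ≠ Finset.univ)
    (hyp : ∀ w : Fin n → ℂ, ∀ x : (Fin r → Fin (n + 1)) → ℂ,
      (∀ k, ¬ isSupp J k → x k = 0) →
      (rho Q d c).mulVec ((PhiMat (m := r) (encMat 1 w)).mulVec x - x) = 0)
    (k₀ q₀ : Fin r → Fin (n + 1)) :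
    (∑ s : Equiv.Perm (Fin r), ∑ w : Equiv.Perm (Fin r),
      (if w * w = 1 then c (s, w) else 0) * tauEnhMat Q d J w (k₀ ∘ s) q₀) = 0 := by
  classical
  have hJlt : J.card < r := by
    have h1 : J ⊂ Finset.univ := Finset.ssubset_univ_iff.mpr hJ
    have := Finset.card_lt_card h1
    simpa using this
  by_cases hq : isSupp J q₀
  swap
  · refine Finset.sum_eq_zero fun s _ => Finset.sum_eq_zero fun w _ => ?_
    rw [tau_apply_of_not_supp Q d w _ hq, mul_zero]
  by_cases hL : (Finset.univ.filter fun t => k₀ t ≠ Fin.last n).card = J.card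
  swap
  · refine Finset.sum_eq_zero fun s _ => Finset.sum_eq_zero fun w _ => ?_
    have htau : tauEnhMat Q d J w (k₀ ∘ s) q₀ = 0 := by
      rw [tauEnhMat, if_neg]
      rintro ⟨-, h2, -⟩
      apply hL
      have hJf : J = Finset.univ.filter fun i => k₀ (s i) ≠ Fin.last n := by
        ext i
        rw [h2 i]
        simp [Function.comp_apply]
      rw [hJf]
      symm
      apply Finset.card_bij (fun i _ => s i)
      · intro i hi
        simp only [Finset.mem_filter, Finset.mem_univ, true_and] at hi ⊢
        exact hi
      · intro i _ i' _ h
        exact s.injective h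
      · intro t ht
        refine ⟨s.symm t, ?_, by simp⟩
        simp only [Finset.mem_filter, Finset.mem_univ, true_and,
          Equiv.apply_symm_apply] at ht ⊢
        exact ht
    rw [htau, mul_zero]
  -- main case
  have hLlt : (Finset.univ.filter fun t => k₀ t ≠ Fin.last n).card < r := by
    rw [hL]; exact hJlt
  have hLne : (Finset.univ.filter fun t => k₀ t ≠ Fin.last n) ≠ Finset.univ := by
    intro h
    rw [h] at hLlt
    simp at hLlt
  obtain ⟨t₀, ht₀c⟩ := not_forall.mp fun h' => hLne (Finset.eq_univ_iff_forall.mpr h')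
  have ht₀ : k₀ t₀ = Fin.last n := by
    simp only [Finset.mem_filter, Finset.mem_univ, true_and, not_not] at ht₀c
    exact ht₀c
  generalize hGdef : (∑ s : Equiv.Perm (Fin r), ∑ w : Equiv.Perm (Fin r),
    (if w * w = 1 then c (s, w) else 0) * tauEnhMat Q d J w (k₀ ∘ s) q₀) = G
  set U := Submodule.span ℂ ((gens Q J k₀ q₀ : Finset (Fin n → ℂ)) : Set (Fin n → ℂ))
    with hUdef
  -- the F-identity
  have hFid : ∀ a b : Fin n,
      (∑ j ∈ Jᶜ, ∑ s : Equiv.Perm (Fin r), ∑ w : Equiv.Perm (Fin r),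
        (if w * w = 1 then c (s, w) else 0) *
          tauEnhMat Q d (insert j J) w ((upd k₀ t₀ b) ∘ s) (upd q₀ j a)) = 0 := by
    intro a b
    have h := Fid Q d c hq hyp (upd k₀ t₀ b) a
    refine Eq.trans (Finset.sum_congr rfl fun j hjm => ?_) h
    exact (rho_apply_of_supp Q d c (upd k₀ t₀ b)
      (isSupp_upd hq (Finset.mem_compl.mp hjm) a)).symm
  -- the diagonal terms recover G
  have hGA : (∑ j ∈ Jᶜ, ∑ s : Equiv.Perm (Fin r), ∑ w : Equiv.Perm (Fin r),
      gA Q d c J q₀ k₀ t₀ j s w) = G := by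
    rw [Finset.sum_comm]
    rw [Finset.sum_congr rfl fun s (_ : s ∈ Finset.univ) => Finset.sum_comm]
    rw [← hGdef]
    refine Finset.sum_congr rfl fun s _ => Finset.sum_congr rfl fun w _ => ?_
    by_cases hX : (if w * w = 1 then c (s, w) else 0) *
        tauEnhMat Q d J w (k₀ ∘ s) q₀ = 0
    · rw [hX]
      refine Finset.sum_eq_zero fun j _ => ?_
      rw [gA]
      by_cases hA' : (s j = t₀ ∧ w j = j)
      · rw [if_pos hA']; exact hX
      · rw [if_neg hA']
    · have htau : tauEnhMat Q d J w (k₀ ∘ s) q₀ ≠ 0 := fun h => hX (by rw [h, mul_zero])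
      have hCOND : (∀ i, w i ≠ i → i ∈ J) ∧ isSupp J (k₀ ∘ s) ∧ isSupp J q₀ := by
        by_contra hc
        exact htau (by rw [tauEnhMat, if_neg hc])
      have hsjs : s (s.symm t₀) = t₀ := s.apply_symm_apply t₀
      have hjsJ : s.symm t₀ ∉ J := by
        intro hmem
        have := (hCOND.2.1 (s.symm t₀)).mp hmem
        simp only [Function.comp_apply, hsjs, ht₀] at this
        exact this rfl
      have hwjs : w (s.symm t₀) = s.symm t₀ := by
        by_contra hmv
        exact hjsJ (hCOND.1 _ hmv)
      rw [Finset.sum_eq_single_of_mem (s.symm t₀) (Finset.mem_compl.mpr hjsJ)]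
      · rw [gA, if_pos ⟨hsjs, hwjs⟩]
      · intro j _ hne
        rw [gA, if_neg]
        rintro ⟨h1, -⟩
        exact hne (s.injective (h1.trans hsjs.symm))
  -- membership of each term
  have hterm_mem : ∀ (b : Fin n) (j : Fin r), j ∈ Jᶜ →
      ∀ s w : Equiv.Perm (Fin r),
      (fun a : Fin n => (if w * w = 1 then c (s, w) else 0) *
          tauEnhMat Q d (insert j J) w ((upd k₀ t₀ b) ∘ s) (upd q₀ j a)
        - (if a = b then (1 : ℂ) else 0) * gA Q d c J q₀ k₀ t₀ j s w) ∈ U := by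
    intro b j hjm s w
    have hjJ : j ∉ J := Finset.mem_compl.mp hjm
    by_cases hw : w * w = 1
    · by_cases hA : s j = t₀ ∧ w j = j
      · have h0 : (fun a : Fin n => (if w * w = 1 then c (s, w) else 0) *
            tauEnhMat Q d (insert j J) w ((upd k₀ t₀ b) ∘ s) (upd q₀ j a)
          - (if a = b then (1 : ℂ) else 0) * gA Q d c J q₀ k₀ t₀ j s w)
            = (0 : Fin n → ℂ) := by
          funext a
          rw [termA Q d hq ht₀ hjJ hw hA.1 hA.2 a b, gA, if_pos hA]
          simp only [Pi.zero_apply]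
          ring
        rw [h0]
        exact Submodule.zero_mem U
      · obtain ⟨u, hu, v, hfac⟩ := termB Q d hQe hq ht₀ hjJ hw hA
        have h0 : (fun a : Fin n => (if w * w = 1 then c (s, w) else 0) *
            tauEnhMat Q d (insert j J) w ((upd k₀ t₀ b) ∘ s) (upd q₀ j a)
          - (if a = b then (1 : ℂ) else 0) * gA Q d c J q₀ k₀ t₀ j s w)
            = ((if w * w = 1 then c (s, w) else 0) * v b) • u := by
          funext a
          rw [hfac a b, gA, if_neg hA]
          simp only [Pi.smul_apply, smul_eq_mul]
          ring
        rw [h0]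
        exact Submodule.smul_mem _ _ hu
    · have h0 : (fun a : Fin n => (if w * w = 1 then c (s, w) else 0) *
          tauEnhMat Q d (insert j J) w ((upd k₀ t₀ b) ∘ s) (upd q₀ j a)
        - (if a = b then (1 : ℂ) else 0) * gA Q d c J q₀ k₀ t₀ j s w)
          = (0 : Fin n → ℂ) := by
        funext a
        simp [gA, hw]
      rw [h0]
      exact Submodule.zero_mem U
  -- the key membership
  have hmemU : ∀ b : Fin n, (fun a : Fin n => (if a = b then (1 : ℂ) else 0) * G) ∈ U := by
    intro b
    have hsum : (fun a : Fin n => ∑ j ∈ Jᶜ, ∑ s : Equiv.Perm (Fin r),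
        ∑ w : Equiv.Perm (Fin r),
        ((if w * w = 1 then c (s, w) else 0) *
            tauEnhMat Q d (insert j J) w ((upd k₀ t₀ b) ∘ s) (upd q₀ j a)
          - (if a = b then (1 : ℂ) else 0) * gA Q d c J q₀ k₀ t₀ j s w)) ∈ U := by
      have heq : (fun a : Fin n => ∑ j ∈ Jᶜ, ∑ s : Equiv.Perm (Fin r),
          ∑ w : Equiv.Perm (Fin r),
          ((if w * w = 1 then c (s, w) else 0) *
              tauEnhMat Q d (insert j J) w ((upd k₀ t₀ b) ∘ s) (upd q₀ j a)
            - (if a = b then (1 : ℂ) else 0) * gA Q d c J q₀ k₀ t₀ j s w))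
          = ∑ j ∈ Jᶜ, ∑ s : Equiv.Perm (Fin r), ∑ w : Equiv.Perm (Fin r),
            (fun a : Fin n =>
              (if w * w = 1 then c (s, w) else 0) *
                tauEnhMat Q d (insert j J) w ((upd k₀ t₀ b) ∘ s) (upd q₀ j a)
              - (if a = b then (1 : ℂ) else 0) * gA Q d c J q₀ k₀ t₀ j s w) := by
        funext a
        simp only [Finset.sum_apply]
      rw [heq]
      exact Submodule.sum_mem _ fun j hjm => Submodule.sum_mem _ fun s _ =>
        Submodule.sum_mem _ fun w _ => hterm_mem b j hjm s w
    have heval : (fun a : Fin n => ∑ j ∈ Jᶜ, ∑ s : Equiv.Perm (Fin r),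
        ∑ w : Equiv.Perm (Fin r),
        ((if w * w = 1 then c (s, w) else 0) *
            tauEnhMat Q d (insert j J) w ((upd k₀ t₀ b) ∘ s) (upd q₀ j a)
          - (if a = b then (1 : ℂ) else 0) * gA Q d c J q₀ k₀ t₀ j s w))
        = (fun a : Fin n => -((if a = b then (1 : ℂ) else 0) * G)) := by
      funext a
      simp only [Finset.sum_sub_distrib]
      rw [hFid a b, zero_sub]
      congr 1
      simp only [← Finset.mul_sum]
      rw [hGA]
    rw [heval] at hsum
    have h2 : (fun a : Fin n => (if a = b then (1 : ℂ) else 0) * G)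
        = -(fun a : Fin n => -((if a = b then (1 : ℂ) else 0) * G)) := by
      funext a; simp
    rw [h2]
    exact Submodule.neg_mem _ hsum
  -- rank argument
  by_contra hG
  have htop : ∀ b : Fin n, (fun a : Fin n => if a = b then (1 : ℂ) else 0) ∈ U := by
    intro b
    have h2 : (fun a : Fin n => if a = b then (1 : ℂ) else 0)
        = G⁻¹ • (fun a : Fin n => (if a = b then (1 : ℂ) else 0) * G) := by
      funext a
      simp only [Pi.smul_apply, smul_eq_mul]
      rw [mul_comm (if a = b then (1 : ℂ) else 0) G, ← mul_assoc,
        inv_mul_cancel₀ hG, one_mul]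
    rw [h2]
    exact Submodule.smul_mem _ _ (hmemU b)
  have hUtop : U = ⊤ := by
    rw [Submodule.eq_top_iff']
    intro x
    rw [pi_eq_sum_univ x]
    refine Submodule.sum_mem _ fun b _ => Submodule.smul_mem _ _ ?_
    have h3 : (fun a : Fin n => if b = a then (1 : ℂ) else 0)
        = (fun a : Fin n => if a = b then (1 : ℂ) else 0) := by
      funext a
      by_cases h : a = b
      · simp [h]
      · simp [h, Ne.symm h]
    exact h3 ▸ htop b
  have hcard : (gens Q J k₀ q₀).card ≤ J.card + J.card := by
    have h1 : gens Q J k₀ q₀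
        = (Finset.univ.filter fun t => k₀ t ≠ Fin.last n).image (egen k₀)
          ∪ J.image (qgen Q q₀) := rfl
    rw [h1]
    exact le_trans (Finset.card_union_le _ _)
      (add_le_add (le_trans (Finset.card_image_le) (le_of_eq hL))
        Finset.card_image_le)
  have hfr : Module.finrank ℂ ↥U ≤ (gens Q J k₀ q₀).card := by
    have h := finrank_span_finset_le_card (R := ℂ) (gens Q J k₀ q₀)
    rw [Set.finrank] at h
    exact h
  have hcontr : n ≤ (gens Q J k₀ q₀).card := by
    calc n = Module.finrank ℂ (Fin n → ℂ) := by
          rw [Module.finrank_fintype_fun_eq_card, Fintype.card_fin]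
      _ = Module.finrank ℂ ↥(⊤ : Submodule ℂ (Fin n → ℂ)) := (finrank_top ℂ _).symm
      _ = Module.finrank ℂ ↥U := by rw [hUtop]
      _ ≤ _ := hfr
  omega

end Aux5

section Aux6

variable {n r : ℕ}

private lemma rhoI_apply (B d : Matrix (Fin n) (Fin n) ℂ)
    (c : Equiv.Perm (Fin r) × Equiv.Perm (Fin r) → ℂ) (I : Finset (Fin r))
    (k q : Fin r → Fin (n + 1)) :
    rhoI B d I c k q = ∑ s : Equiv.Perm (Fin r), ∑ w : Equiv.Perm (Fin r),
      (if w * w = 1 then c (s, w) else 0) * tauEnhMat B d I w (k ∘ s) q := by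
  rw [rhoI, Matrix.sum_apply]
  refine Finset.sum_congr rfl fun s _ => ?_
  rw [Matrix.sum_apply]
  refine Finset.sum_congr rfl fun w _ => ?_
  rw [Matrix.smul_apply, smul_eq_mul, psi_mul_apply]

end Aux6

/-- Let `G = O(V)` with `dim V = n ≥ 2r` (form matrix `Q` symmetric), or
`G = Sp(V)` with `n > 2r` (`Q` skew-symmetric).  Let `δ ∈ B_r(εn)`, given by its
coefficients `c` on the basis `{Ψ|_r(s)τ_z}`, and let `J ⊊ {1,…,r}`.  If
`ρ(δ)(Φ(e^w)(v) − v) = 0` for all `w ∈ V` and all `v ∈ V̲_J^{⊗r}`, then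
`ρ_J(δ) = 0`, i.e. `ρ(δ)` annihilates `V̲_J^{⊗r}`. -/
theorem key_lemma_rho_annihilates {n r : ℕ} (Q : Matrix (Fin n) (Fin n) ℂ)
    (hQ : IsUnit Q) (hcase : (Qᵀ = Q ∧ 2 * r ≤ n) ∨ (Qᵀ = -Q ∧ 2 * r < n))
    (c : Equiv.Perm (Fin r) × Equiv.Perm (Fin r) → ℂ) (J : Finset (Fin r))
    (hJ : J ≠ Finset.univ)
    (hyp : ∀ w : Fin n → ℂ, ∀ x : (Fin r → Fin (n + 1)) → ℂ,
      (∀ k, ¬ isSupp J k → x k = 0) →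
      (rho Q (Q⁻¹)ᵀ c).mulVec ((PhiMat (m := r) (encMat 1 w)).mulVec x - x) = 0) :
    rhoI Q (Q⁻¹)ᵀ J c = 0 ∧
      ∀ x : (Fin r → Fin (n + 1)) → ℂ, (∀ k, ¬ isSupp J k → x k = 0) →
        (rho Q (Q⁻¹)ᵀ c).mulVec x = 0 := by
  classical
  have hQe : Qᵀ = Q ∨ Qᵀ = -Q := by
    rcases hcase with ⟨h1, -⟩ | ⟨h1, -⟩
    exacts [Or.inl h1, Or.inr h1]
  have hn : 2 * r ≤ n := by
    rcases hcase with ⟨-, h2⟩ | ⟨-, h2⟩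
    exacts [h2, le_of_lt h2]
  have hm := master Q (Q⁻¹)ᵀ hQe hn c J hJ hyp
  have hzero : rhoI Q (Q⁻¹)ᵀ J c = 0 := by
    apply Matrix.ext
    intro k q
    rw [rhoI_apply, hm k q]
    simp
  refine ⟨hzero, ?_⟩
  intro x hx
  funext k
  show (rho Q (Q⁻¹)ᵀ c).mulVec x k = 0
  simp only [Matrix.mulVec, dotProduct]
  refine Finset.sum_eq_zero fun q _ => ?_
  by_cases hxq : x q = 0
  · rw [hxq, mul_zero]
  · have hq : isSupp J q := by
      by_contra hq
      exact hxq (hx q hq)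
    rw [rho_apply_of_supp Q (Q⁻¹)ᵀ c k hq, hm k q, zero_mul]

end EnhancedBrauer
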